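/- The symbol of the principal part of Hibler's operator is strongly elliptic: for every ξ ∈ ℝ² with |ξ| = 1 and every η ∈ ℂ² with |η| = 1, Re ⟨A_#(ξ) η, η⟩ ≥ c δ / e², where A_#(ξ)_{ij} = Σ_{k,l} a_{ij}^{kl} ξ_k ξ_l, the coefficients a_{ij}^{kl} = (P/(2Δ_δ(ε)))(S_{ij}^{kl} − Δ_δ(ε)^{−2} (Sε)_{ik}(Sε)_{jl}) are evaluated at a fixed 2×2 matrix ε, P > 0, δ > 0, and c = P/(2 Δ_δ(ε)³) > 0. -/

import Mathlib

/-!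
Write `η = a + i b` with `a, b ∈ ℝ²`. Since the symbol is real, `Re ⟨A_#(ξ) η, η⟩` is the sum of the
real quadratic forms of `A_#(ξ)` at `a` and at `b`. At a real vector `v` that form equals
`P / (2 Δ_δ³) · (Δ_δ² Δ²(v ξᵀ) − ⟨𝕊ε, v ξᵀ⟩²)`, and Cauchy–Schwarz for the positive semidefinite
form of `𝕊` bounds `⟨𝕊ε, v ξᵀ⟩²` by `Δ²(ε) Δ²(v ξᵀ)`; as `Δ_δ² = δ + Δ²(ε)`, what is left is
`δ Δ²(v ξᵀ) ≥ δ |v|² |ξ|² / e²`. Summing over `v = a, b` gives the bound, because `|a|² + |b|² = 1`.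
-/

open Finset Real Matrix

/-- Hibler's quadratic form `Δ²(d)`. -/
noncomputable def Dsq (e : ℝ) (d : Matrix (Fin 2) (Fin 2) ℝ) : ℝ :=
  (d 0 0 + d 1 1)^2 + (1/e^2)*(d 0 0 - d 1 1)^2 + (1/e^2)*(d 0 1 + d 1 0)^2

/-- The 4×4 matrix representing Hibler's map `𝕊`. -/
noncomputable def S4 (e : ℝ) : Matrix (Fin 4) (Fin 4) ℝ :=
  !![1+1/e^2, 0, 0, 1-1/e^2;
     0, 1/e^2, 1/e^2, 0;
     0, 1/e^2, 1/e^2, 0;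
     1-1/e^2, 0, 0, 1+1/e^2]

/-- Identification of a 2×2 matrix with a vector in ℝ⁴. -/
def vec4 (d : Matrix (Fin 2) (Fin 2) ℝ) : Fin 4 → ℝ := ![d 0 0, d 0 1, d 1 0, d 1 1]

/-- Pair index `(i,k) ↦ 2i+k`. -/
def pidx (i k : Fin 2) : Fin 4 := ⟨2*i.1 + k.1, by have := i.2; have := k.2; omega⟩

/-- Hibler's tensor `𝕊_{ij}^{kl}`. -/
noncomputable def Sten (e : ℝ) (i j k l : Fin 2) : ℝ := S4 e (pidx i k) (pidx j l)

/-- The matrix `𝕊ε`. -/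
noncomputable def Smap (e : ℝ) (ε : Matrix (Fin 2) (Fin 2) ℝ) : Matrix (Fin 2) (Fin 2) ℝ :=
  fun i k => ∑ j : Fin 2, ∑ l : Fin 2, Sten e i j k l * ε j l

/-- Regularized `Δ_δ(ε) = √(δ + Δ²(ε))`. -/
noncomputable def Ddel (e δ : ℝ) (ε : Matrix (Fin 2) (Fin 2) ℝ) : ℝ :=
  Real.sqrt (δ + Dsq e ε)

/-- Principal coefficients `a_{ij}^{kl}` of Hibler's operator. -/
noncomputable def aCoef (e δ P : ℝ) (ε : Matrix (Fin 2) (Fin 2) ℝ) (i j k l : Fin 2) : ℝ :=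
  P/(2*Ddel e δ ε) * (Sten e i j k l - (1/(Ddel e δ ε)^2) * Smap e ε i k * Smap e ε j l)

noncomputable def hiblerForm (e : ℝ) (d d' : Matrix (Fin 2) (Fin 2) ℝ) : ℝ :=
  (d 0 0 + d 1 1) * (d' 0 0 + d' 1 1) + (1/e^2) * (d 0 0 - d 1 1) * (d' 0 0 - d' 1 1)
    + (1/e^2) * (d 0 1 + d 1 0) * (d' 0 1 + d' 1 0)

lemma hiblerForm_self (e : ℝ) (d : Matrix (Fin 2) (Fin 2) ℝ) : hiblerForm e d d = Dsq e d := by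
  simp only [hiblerForm, Dsq]; ring

lemma Dsq_nonneg (e : ℝ) (d : Matrix (Fin 2) (Fin 2) ℝ) : 0 ≤ Dsq e d := by
  unfold Dsq; positivity

lemma hiblerForm_sq_le_Dsq_mul_Dsq (e : ℝ) (d d' : Matrix (Fin 2) (Fin 2) ℝ) :
    hiblerForm e d d' ^ 2 ≤ Dsq e d * Dsq e d' := by
  set f := 1/e^2
  set u₁ := d 0 0 + d 1 1; set u₂ := d 0 0 - d 1 1; set u₃ := d 0 1 + d 1 0
  set v₁ := d' 0 0 + d' 1 1; set v₂ := d' 0 0 - d' 1 1; set v₃ := d' 0 1 + d' 1 0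
  have lagrange : Dsq e d * Dsq e d' - hiblerForm e d d' ^ 2
      = f * (u₂ * v₁ - u₁ * v₂)^2 + f * (u₃ * v₁ - u₁ * v₃)^2 + f^2 * (u₂ * v₃ - u₃ * v₂)^2 := by
    simp only [Dsq, hiblerForm]; ring
  have hf : 0 ≤ f := by positivity
  nlinarith [mul_nonneg hf (sq_nonneg (u₂ * v₁ - u₁ * v₂)),
    mul_nonneg hf (sq_nonneg (u₃ * v₁ - u₁ * v₃)), mul_nonneg (sq_nonneg f) (sq_nonneg (u₂ * v₃ - u₃ * v₂))]

lemma hiblerForm_comm (e : ℝ) (d d' : Matrix (Fin 2) (Fin 2) ℝ) :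
    hiblerForm e d d' = hiblerForm e d' d := by
  simp only [hiblerForm]; ring

lemma sum_Sten_mul_mul (e : ℝ) (x y : Matrix (Fin 2) (Fin 2) ℝ) :
    ∑ i, ∑ j, ∑ k, ∑ l, Sten e i j k l * x i k * y j l = hiblerForm e x y := by
  simp only [Sten, S4, pidx, hiblerForm, Fin.sum_univ_two, one_div, Fin.isValue,
    Fin.coe_ofNat_eq_mod, Nat.zero_mod, mul_zero, add_zero, Fin.zero_eta, of_apply, cons_val',
    cons_val_zero, cons_val_fin_one, Nat.mod_succ, zero_add, Fin.mk_one, cons_val_one, zero_mul,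
    mul_one, Fin.reduceFinMk, Matrix.cons_val, Nat.reduceAdd]
  ring

lemma sum_Smap_mul (e : ℝ) (ε x : Matrix (Fin 2) (Fin 2) ℝ) :
    ∑ i, ∑ k, Smap e ε i k * x i k = hiblerForm e ε x := by
  rw [hiblerForm_comm, ← sum_Sten_mul_mul]
  simp only [Smap, Fin.sum_univ_two]
  ring

lemma sum_aCoef_mul_mul (e δ P : ℝ) (ε x : Matrix (Fin 2) (Fin 2) ℝ) :
    ∑ i, ∑ j, ∑ k, ∑ l, aCoef e δ P ε i j k l * x i k * x j l
      = P / (2 * Ddel e δ ε) * (Dsq e x - hiblerForm e ε x ^ 2 / Ddel e δ ε ^ 2) := by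
  rw [← sum_Smap_mul, ← hiblerForm_self, ← sum_Sten_mul_mul]
  simp only [aCoef, Fin.sum_univ_two]
  ring

lemma Ddel_sq {e δ : ℝ} (hδ : 0 ≤ δ) (ε : Matrix (Fin 2) (Fin 2) ℝ) :
    Ddel e δ ε ^ 2 = δ + Dsq e ε :=
  Real.sq_sqrt (add_nonneg hδ (Dsq_nonneg e ε))

lemma Ddel_pos {e δ : ℝ} (hδ : 0 < δ) (ε : Matrix (Fin 2) (Fin 2) ℝ) : 0 < Ddel e δ ε :=
  Real.sqrt_pos.mpr (add_pos_of_pos_of_nonneg hδ (Dsq_nonneg e ε))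

lemma mul_Dsq_le_sum_aCoef_mul_mul {e δ P : ℝ} (hδ : 0 < δ) (hP : 0 ≤ P)
    (ε x : Matrix (Fin 2) (Fin 2) ℝ) :
    P / (2 * Ddel e δ ε ^ 3) * δ * Dsq e x
      ≤ ∑ i, ∑ j, ∑ k, ∑ l, aCoef e δ P ε i j k l * x i k * x j l := by
  set D := Ddel e δ ε
  have hD : 0 < D := Ddel_pos hδ ε
  have hCS : δ * Dsq e x ≤ D ^ 2 * Dsq e x - hiblerForm e ε x ^ 2 := by
    rw [Ddel_sq hδ.le]
    nlinarith [hiblerForm_sq_le_Dsq_mul_Dsq e ε x]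
  calc P / (2 * D ^ 3) * δ * Dsq e x
      ≤ P / (2 * D ^ 3) * (D ^ 2 * Dsq e x - hiblerForm e ε x ^ 2) := by
        rw [mul_assoc]; gcongr
    _ = P / (2 * D) * (Dsq e x - hiblerForm e ε x ^ 2 / D ^ 2) := by field_simp
    _ = _ := (sum_aCoef_mul_mul e δ P ε x).symm

lemma Dsq_vecMulVec (e : ℝ) (v ξ : Fin 2 → ℝ) :
    Dsq e (vecMulVec v ξ) = (v ⬝ᵥ ξ) ^ 2 + 1/e^2 * (v 0 ^ 2 + v 1 ^ 2) * (ξ 0 ^ 2 + ξ 1 ^ 2) := by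
  simp only [Dsq, vecMulVec_apply, dotProduct, Fin.sum_univ_two]; ring

lemma re_sum_ofReal_mul_mul_conj {n : Type*} [Fintype n] (A : Matrix n n ℝ) (η : n → ℂ) :
    (∑ i, (∑ j, (A i j : ℂ) * η j) * (starRingEnd ℂ) (η i)).re
      = ∑ i, ∑ j, A i j * (η i).re * (η j).re + ∑ i, ∑ j, A i j * (η i).im * (η j).im := by
  simp only [Complex.re_sum, Finset.sum_mul, Complex.mul_re, Complex.mul_im, Complex.ofReal_re,
    Complex.ofReal_im, Complex.conj_re, Complex.conj_im, ← Finset.sum_add_distrib]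
  exact Finset.sum_congr rfl fun i _ ↦ Finset.sum_congr rfl fun j _ ↦ by ring

lemma sum_symbol_mul_mul (a : Fin 2 → Fin 2 → Fin 2 → Fin 2 → ℝ) (ξ v : Fin 2 → ℝ) :
    ∑ i, ∑ j, (∑ k, ∑ l, a i j k l * ξ k * ξ l) * v i * v j
      = ∑ i, ∑ j, ∑ k, ∑ l, a i j k l * vecMulVec v ξ i k * vecMulVec v ξ j l := by
  simp only [vecMulVec_apply, Fin.sum_univ_two]; ring

lemma mul_sq_le_sum_symbol_mul_mul (e : ℝ) {δ P : ℝ} (hδ : 0 < δ) (hP : 0 ≤ P)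
    (ε : Matrix (Fin 2) (Fin 2) ℝ) {ξ : Fin 2 → ℝ} (hξ : ξ 0 ^ 2 + ξ 1 ^ 2 = 1) (v : Fin 2 → ℝ) :
    P / (2 * Ddel e δ ε ^ 3) * δ / e ^ 2 * (v 0 ^ 2 + v 1 ^ 2)
      ≤ ∑ i, ∑ j, (∑ k, ∑ l, aCoef e δ P ε i j k l * ξ k * ξ l) * v i * v j := by
  rw [sum_symbol_mul_mul]
  refine le_trans ?_ (mul_Dsq_le_sum_aCoef_mul_mul hδ hP ε _)
  have := Ddel_pos (e := e) hδ ε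
  rw [Dsq_vecMulVec, hξ]
  calc _ = P / (2 * Ddel e δ ε ^ 3) * δ * (0 + 1 / e ^ 2 * (v 0 ^ 2 + v 1 ^ 2) * 1) := by ring
    _ ≤ _ := by gcongr; positivity

theorem hibler_symbol_strongly_elliptic_general (e δ P : ℝ) (hδ : 0 < δ) (hP : 0 < P)
    (ε : Matrix (Fin 2) (Fin 2) ℝ)
    (ξ : Fin 2 → ℝ) (hξ : ξ 0^2 + ξ 1^2 = 1)
    (η : Fin 2 → ℂ) (hη : ‖η 0‖^2 + ‖η 1‖^2 = 1) :
    (∑ i : Fin 2, (∑ j : Fin 2,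
        ((∑ k : Fin 2, ∑ l : Fin 2, aCoef e δ P ε i j k l * ξ k * ξ l : ℝ) : ℂ) * η j)
          * (starRingEnd ℂ) (η i)).re
      ≥ (P / (2 * (Ddel e δ ε)^3)) * δ / e^2 := by
  rw [re_sum_ofReal_mul_mul_conj (fun i j ↦ ∑ k, ∑ l, aCoef e δ P ε i j k l * ξ k * ξ l)]
  have hre := mul_sq_le_sum_symbol_mul_mul e hδ hP.le ε hξ fun i ↦ (η i).re
  have him := mul_sq_le_sum_symbol_mul_mul e hδ hP.le ε hξ fun i ↦ (η i).im
  have hη' : ((η 0).re ^ 2 + (η 1).re ^ 2) + ((η 0).im ^ 2 + (η 1).im ^ 2) = 1 := by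
    simp only [Complex.sq_norm, Complex.normSq_apply] at hη
    linear_combination hη
  linear_combination hre + him - P / (2 * Ddel e δ ε ^ 3) * δ / e ^ 2 * hη'

/-- strong ellipticity of the symbol of the principal part of Hibler's
operator: Re ⟨A_#(ξ)η, η⟩ ≥ cδ/e² with c = P/(2Δ_δ(ε)³), for unit ξ ∈ ℝ², η ∈ ℂ². -/
theorem hibler_symbol_strongly_elliptic (e δ P : ℝ) (he : 0 < e) (hδ : 0 < δ) (hP : 0 < P)
    (ε : Matrix (Fin 2) (Fin 2) ℝ)
    (ξ : Fin 2 → ℝ) (hξ : ξ 0^2 + ξ 1^2 = 1)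
    (η : Fin 2 → ℂ) (hη : ‖η 0‖^2 + ‖η 1‖^2 = 1) :
    (∑ i : Fin 2, (∑ j : Fin 2,
        ((∑ k : Fin 2, ∑ l : Fin 2, aCoef e δ P ε i j k l * ξ k * ξ l : ℝ) : ℂ) * η j)
          * (starRingEnd ℂ) (η i)).re
      ≥ (P / (2 * (Ddel e δ ε)^3)) * δ / e^2 :=
  hibler_symbol_strongly_elliptic_general e δ P hδ hP ε ξ hξ η hη
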